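/- Let M' be a matroid whose ground set E' is finite, let e ∈ E', and let M = M' \ e be the matroid obtained from M' by deleting e. Let w : E' → ℝ be injective on E'. If B is a maximum-weight basis of M and B' is a maximum-weight basis of M', then B' \ B ⊆ {e} and B \ B' has at most one element. In other words, inserting the element e changes the maximum-weight basis by at most one element: either it stays the same, or e is added, or some element of B is replaced by e. -/

import Mathlib

/-!
With injective weights, a maximum-weight base is the greedy set: `x` belongs to it iff `x` is
not spanned by the strictly heavier elements. Deleting `e` only removes `e` from these spanning
sets, so every element of `B'` other than `e` stays in `B`. An element `x` of `B \ B'` is spanned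
by its heavier elements in `M'` but not by those other than `e`, so by exchange `e` is spanned by
`x` together with its heavier elements other than `e`. If `a` were lighter than another such `b`,
then `e` would be spanned by the elements heavier than `a` other than `e`, and deleting `e` could
not have changed whether `a` is spanned.
-/

open Matroid Set

namespace Matroid

variable {α : Type*} {M : Matroid α} {w : α → ℝ} {B : Set α} {x y e : α}

def IsMaxWeightBase (M : Matroid α) (w : α → ℝ) (B : Set α) : Prop :=
  M.IsBase B ∧ ∀ C, M.IsBase C → ∑ᶠ x ∈ C, w x ≤ ∑ᶠ x ∈ B, w x

lemma IsMaxWeightBase.weight_le_of_exchange [M.RankFinite] (hB : M.IsMaxWeightBase w B)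
    (hx : x ∈ B) (hy : y ∉ B) (hxy : M.IsBase (insert y (B \ {x}))) : w y ≤ w x := by
  have hfin : (B \ {x}).Finite := hB.1.finite.sdiff
  have hsplit : ∑ᶠ z ∈ B, w z = w x + ∑ᶠ z ∈ B \ {x}, w z := by
    rw [← finsum_mem_insert w (fun h => h.2 rfl) hfin, insert_sdiff_singleton,
      insert_eq_of_mem hx]
  have hle := hB.2 _ hxy
  rw [finsum_mem_insert w (fun h => hy h.1) hfin, hsplit] at hle
  linarith

lemma IsMaxWeightBase.notMem_closure_preimage_Ioi [M.RankFinite] (hB : M.IsMaxWeightBase w B)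
    (hx : x ∈ B) : x ∉ M.closure (w ⁻¹' Ioi (w x)) := by
  intro hcl
  obtain ⟨y, ⟨hxy, hyE⟩, hycl⟩ : ∃ y ∈ w ⁻¹' Ioi (w x) ∩ M.E, y ∉ M.closure (B \ {x}) := by
    by_contra! h
    rw [← closure_inter_ground] at hcl
    exact hB.1.indep.notMem_closure_sdiff_of_mem hx
      (M.closure_subset_closure_of_subset_closure h hcl)
  have hyB : y ∉ B := fun hyB =>
    hycl (M.subset_closure _ (sdiff_subset.trans hB.1.subset_ground)
      ⟨hyB, fun h => lt_irrefl (w x) (h ▸ hxy)⟩)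
  exact (hB.weight_le_of_exchange hx hyB
    (hB.1.exchange_base_of_notMem_closure hx hycl)).not_gt hxy

lemma IsMaxWeightBase.mem_of_notMem_closure_preimage_Ioi [M.RankFinite]
    (hB : M.IsMaxWeightBase w B) (hw : InjOn w M.E) (hxE : x ∈ M.E)
    (hx : x ∉ M.closure (w ⁻¹' Ioi (w x))) : x ∈ B := by
  by_contra hxB
  have hC := hB.1.fundCircuit_isCircuit hxE hxB
  -- A lighter element of the fundamental circuit of `x` in `B` can be exchanged for `x`.
  obtain ⟨y, hyC, hyx⟩ : ∃ y ∈ M.fundCircuit x B, y ∉ insert x (w ⁻¹' Ioi (w x)) := by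
    by_contra! h
    exact hx (M.closure_subset_closure (sdiff_subset_iff.2 h)
      (hC.mem_closure_sdiff_singleton_of_mem (M.mem_fundCircuit x B)))
  rw [mem_insert_iff, not_or] at hyx
  have hyB : y ∈ B := ((M.fundCircuit_subset_insert x B) hyC).resolve_left hyx.1
  have hxcl : x ∈ M.closure B := by rwa [hB.1.closure_eq]
  have hexch := hB.1.exchange_isBase_of_indep' hyB hxB
    ((hB.1.indep.mem_fundCircuit_iff hxcl hxB).1 hyC)
  rw [← insert_sdiff_singleton_comm (Ne.symm hyx.1)] at hexch
  have hwxy : w x ≤ w y := hB.weight_le_of_exchange hyB hxB hexch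
  exact hyx.1 (hw (hB.1.subset_ground hyB) hxE
    (le_antisymm (not_lt.1 hyx.2) hwxy))

def greedyBase (M : Matroid α) (w : α → ℝ) : Set α :=
  {x | x ∈ M.E ∧ x ∉ M.closure (w ⁻¹' Ioi (w x))}

lemma IsMaxWeightBase.eq_greedyBase [M.RankFinite] (hB : M.IsMaxWeightBase w B)
    (hw : InjOn w M.E) : B = M.greedyBase w :=
  ext fun _ => ⟨fun hx => ⟨hB.1.subset_ground hx, hB.notMem_closure_preimage_Ioi hx⟩,
    fun ⟨hxE, hx⟩ => hB.mem_of_notMem_closure_preimage_Ioi hw hxE hx⟩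

lemma mem_greedyBase_delete_singleton_iff : x ∈ (M ＼ {e}).greedyBase w ↔
    x ∈ M.E \ {e} ∧ x ∉ M.closure (w ⁻¹' Ioi (w x) \ {e}) := by
  rw [greedyBase, mem_ofPred_eq, delete_closure_eq, delete_ground]
  exact and_congr_right fun hx => not_congr ⟨fun h => h.1, fun h => ⟨h, hx.2⟩⟩

lemma greedyBase_sdiff_greedyBase_delete_subset (M : Matroid α) (w : α → ℝ) (e : α) :
    M.greedyBase w \ (M ＼ {e}).greedyBase w ⊆ {e} := by
  rintro x ⟨⟨hxE, hxcl⟩, hx⟩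
  by_contra hxe
  exact hxcl (M.closure_subset_closure sdiff_subset
    (not_not.1 fun h => hx (mem_greedyBase_delete_singleton_iff.2 ⟨⟨hxE, hxe⟩, h⟩)))

lemma mem_closure_insert_of_mem_greedyBase_delete_sdiff
    (hx : x ∈ (M ＼ {e}).greedyBase w \ M.greedyBase w) :
    e ∈ M.closure (insert x (w ⁻¹' Ioi (w x) \ {e})) := by
  obtain ⟨⟨hxE, -⟩, hxcl⟩ := mem_greedyBase_delete_singleton_iff.1 hx.1
  exact mem_closure_insert hxcl
    (M.closure_subset_closure (subset_insert_sdiff_singleton e _) (not_not.1 (hx.2 ⟨hxE, ·⟩)))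

lemma greedyBase_delete_sdiff_greedyBase_subsingleton (hw : InjOn w M.E) :
    ((M ＼ {e}).greedyBase w \ M.greedyBase w).Subsingleton := by
  intro a ha b hb
  by_contra hab
  have hE {x : α} (hx : x ∈ (M ＼ {e}).greedyBase w \ M.greedyBase w) : x ∈ M.E :=
    (mem_greedyBase_delete_singleton_iff.1 hx.1).1.1
  wlog hlt : w a < w b generalizing a b
  · exact this hb ha (Ne.symm hab) ((hw.ne (hE hb) (hE ha) (Ne.symm hab)).lt_of_le (not_lt.1 hlt))
  have hbe : b ≠ e := (mem_greedyBase_delete_singleton_iff.1 hb.1).1.2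
  -- `b` and the elements heavier than `b` span `e`, and all of them are heavier than `a`.
  have hspan : e ∈ M.closure (w ⁻¹' Ioi (w a) \ {e}) :=
    M.closure_subset_closure
      (insert_subset (show b ∈ w ⁻¹' Ioi (w a) \ {e} from ⟨hlt, hbe⟩)
        (sdiff_subset_sdiff_left fun y hy => hlt.trans hy))
      (mem_closure_insert_of_mem_greedyBase_delete_sdiff hb)
  refine ha.2 ⟨hE ha, fun hacl => (mem_greedyBase_delete_singleton_iff.1 ha.1).2 ?_⟩
  rwa [closure_sdiff_singleton_eq_closure hspan]

end Matroid

theorem insert_changes_max_weight_base_by_at_most_one_general {α : Type*}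
    (M' : Matroid α) (hE : M'.E.Finite) (e : α)
    (w : α → ℝ) (hw : Set.InjOn w M'.E)
    (B B' : Set α)
    (hB : (M' ↾ (M'.E \ {e})).IsBase B)
    (hBmax : ∀ C : Set α, (M' ↾ (M'.E \ {e})).IsBase C →
      ∑ᶠ x ∈ C, w x ≤ ∑ᶠ x ∈ B, w x)
    (hB' : M'.IsBase B')
    (hB'max : ∀ C : Set α, M'.IsBase C → ∑ᶠ x ∈ C, w x ≤ ∑ᶠ x ∈ B', w x) :
    B' \ B ⊆ {e} ∧ (B \ B').Subsingleton := by
  have : M'.Finite := ⟨hE⟩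
  obtain rfl : B = (M' ＼ {e}).greedyBase w :=
    IsMaxWeightBase.eq_greedyBase (M := M' ＼ {e}) ⟨hB, hBmax⟩ (hw.mono sdiff_subset)
  obtain rfl : B' = M'.greedyBase w := IsMaxWeightBase.eq_greedyBase ⟨hB', hB'max⟩ hw
  exact ⟨M'.greedyBase_sdiff_greedyBase_delete_subset w e,
    greedyBase_delete_sdiff_greedyBase_subsingleton hw⟩

/-- Inserting an element `e` changes the maximum-weight basis by at most one
element: if `B` is a maximum-weight basis of `M' \ e` and `B'` is a
maximum-weight basis of `M'`, then `B' \ B ⊆ {e}` and `B \ B'` has at most one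
element. Here the deletion `M' \ e` is the restriction of `M'` to `M'.E \ {e}`. -/
theorem insert_changes_max_weight_base_by_at_most_one {α : Type*}
    (M' : Matroid α) (hE : M'.E.Finite) (e : α) (he : e ∈ M'.E)
    (w : α → ℝ) (hw : Set.InjOn w M'.E)
    (B B' : Set α)
    (hB : (M' ↾ (M'.E \ {e})).IsBase B)
    (hBmax : ∀ C : Set α, (M' ↾ (M'.E \ {e})).IsBase C →
      ∑ᶠ x ∈ C, w x ≤ ∑ᶠ x ∈ B, w x)
    (hB' : M'.IsBase B')
    (hB'max : ∀ C : Set α, M'.IsBase C → ∑ᶠ x ∈ C, w x ≤ ∑ᶠ x ∈ B', w x) :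
    B' \ B ⊆ {e} ∧ (B \ B').Subsingleton :=
  insert_changes_max_weight_base_by_at_most_one_general M' hE e w hw B B' hB hBmax hB' hB'max
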